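/- arXiv:1701.04855 — 5 statements merged into one kernel-verified Lean document; each statement's English description precedes it below -/
import Mathlib

section
/- Dobinski's formula: B_n = (1/e) ∑_{k=0}^∞ k^n / k! for all n ≥ 0. -/
open scoped BigOperators

noncomputable def bell (n : ℕ) : ℕ := Nat.card (Finpartition (Finset.univ : Finset (Fin n)))

/-! Classifying the partitions of an `(n+1)`-set by the block containing a fixed point shows that
their number satisfies the Bell recurrence `B (n+1) = ∑ m, (n choose m) B (n-m)`. The series
`S n = ∑ k, k ^ n / k!` satisfies the same recurrence: shift `k ↦ k + 1`, cancel one factor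
`k + 1` against the factorial and expand `(k + 1) ^ n` binomially. Since `S 0 = e`,
`S n = e B n` for all `n`. -/

open Finset
open scoped Nat

namespace Finpartition

section GeneralizedBooleanAlgebra

variable {α : Type*} [GeneralizedBooleanAlgebra α] [DecidableEq α] {a b : α}

lemma parts_avoid_of_mem {P : Finpartition a} (hb : b ∈ P.parts) :
    (P.avoid b).parts = P.parts.erase b := by
  ext c
  simp only [mem_avoid, mem_erase]
  constructor
  · rintro ⟨d, hd, hdb, rfl⟩
    have hne : d ≠ b := by rintro rfl; exact hdb le_rfl
    have hdisj : Disjoint d b := P.disjoint hd hb hne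
    rw [hdisj.sdiff_eq_left]
    exact ⟨hne, hd⟩
  · rintro ⟨hne, hc⟩
    have hdisj : Disjoint c b := P.disjoint hc hb hne
    exact ⟨c, hc, fun hcb => P.ne_bot hc (hdisj.eq_bot_of_le hcb), hdisj.sdiff_eq_left⟩

def subtypeMemPartsEquiv (hb : b ≠ ⊥) (hba : b ≤ a) :
    {P : Finpartition a // b ∈ P.parts} ≃ Finpartition (a \ b) where
  toFun P := P.1.avoid b
  invFun Q := ⟨Q.extend hb disjoint_sdiff_self_left (sdiff_sup_cancel hba), mem_insert_self _ _⟩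
  left_inv P := by
    ext1; ext1
    rw [extend_parts, parts_avoid_of_mem P.2, insert_erase P.2]
  right_inv Q := by
    have hbQ : b ∉ Q.parts := fun h => hb (disjoint_sdiff_self_right.eq_bot_of_le (Q.le h))
    ext1
    rw [parts_avoid_of_mem (mem_insert_self _ _), extend_parts, erase_insert hbQ]

end GeneralizedBooleanAlgebra

variable {α : Type*} [DecidableEq α]

lemma card_eq_sum_card_sdiff_insert {s : Finset α} {a : α} (ha : a ∈ s) :
    Fintype.card (Finpartition s) =
      ∑ u ∈ (s.erase a).powerset, Fintype.card (Finpartition (s \ insert a u)) := by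
  rw [← card_univ, card_eq_sum_card_fiberwise (f := fun P => (P.part a).erase a)
    fun P _ => mem_powerset.2 (erase_subset_erase a (P.part_subset a))]
  refine sum_congr rfl fun u hu => ?_
  have hus : u ⊆ s.erase a := mem_powerset.1 hu
  have hau : a ∉ u := fun h => notMem_erase a s (hus h)
  have hfiber : ∀ P : Finpartition s, (P.part a).erase a = u ↔ insert a u ∈ P.parts := by
    intro P
    constructor
    · rintro rfl
      rw [insert_erase (P.mem_part_self.2 ha)]
      exact P.part_mem.2 ha
    · intro h
      rw [P.part_eq_of_mem h (mem_insert_self a u), erase_insert hau]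
  rw [← Fintype.card_congr (subtypeMemPartsEquiv (insert_ne_empty a u)
    (insert_subset ha (hus.trans (erase_subset a s)))), Fintype.card_subtype]
  simp_rw [hfiber]

theorem card_eq_bell (s : Finset α) : Fintype.card (Finpartition s) = Nat.bell #s := by
  induction s using Finset.strongInduction with
  | H s ih =>
  obtain rfl | ⟨a, ha⟩ := s.eq_empty_or_nonempty
  · rw [card_empty, Nat.bell_zero, ← Finset.bot_eq_empty]
    exact Fintype.card_unique
  have hs : #s = #(s.erase a) + 1 := (card_erase_add_one ha).symm
  rw [card_eq_sum_card_sdiff_insert ha, hs, Nat.bell_succ, ← Nat.range_succ_eq_Iic]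
  refine (sum_congr rfl fun u hu => ?_).trans
    (sum_powerset_apply_card fun m => Nat.bell (#(s.erase a) - m))
  have hus : u ⊆ s.erase a := mem_powerset.1 hu
  have hsub : insert a u ⊆ s := insert_subset ha (hus.trans (erase_subset a s))
  rw [ih _ (sdiff_ssubset hsub (insert_nonempty a u)), sdiff_insert, ← erase_sdiff_comm,
    card_sdiff_of_subset hus]

end Finpartition

lemma succ_pow_succ_div_factorial_succ (k n : ℕ) :
    ((k + 1 : ℕ) : ℝ) ^ (n + 1) / (k + 1)! =
      ∑ m ∈ range (n + 1), (n.choose m : ℝ) * ((k : ℝ) ^ (n - m) / k !) := by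
  rw [Nat.factorial_succ, pow_succ', Nat.cast_mul, mul_div_mul_left _ _ (by positivity),
    Nat.cast_succ, add_comm, add_pow, sum_div]
  refine sum_congr rfl fun m _ => ?_
  rw [one_pow, one_mul]
  ring

theorem hasSum_pow_div_factorial (n : ℕ) :
    HasSum (fun k : ℕ => (k : ℝ) ^ n / k !) (Nat.bell n * Real.exp 1) := by
  induction n using Nat.strong_induction_on with
  | _ n ih =>
  cases n with
  | zero => simpa [Real.exp_eq_exp_ℝ] using NormedSpace.expSeries_div_hasSum_exp (1 : ℝ)
  | succ n =>
    have hshift : HasSum (fun k : ℕ => ((k + 1 : ℕ) : ℝ) ^ (n + 1) / (k + 1)!)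
        (Nat.bell (n + 1) * Real.exp 1) := by
      simp_rw [succ_pow_succ_div_factorial_succ]
      rw [Nat.bell_succ, ← Nat.range_succ_eq_Iic]
      push_cast
      rw [sum_mul]
      exact hasSum_sum fun m hm => by
        simpa only [mul_assoc] using (ih (n - m) (by omega)).mul_left (n.choose m : ℝ)
    simpa using (hasSum_nat_add_iff (f := fun k : ℕ => (k : ℝ) ^ (n + 1) / k !) 1).mp hshift

/-- Dobinski's formula. -/
theorem dobinski (n : ℕ) :
    (bell n : ℝ) = (1 / Real.exp 1) * ∑' k : ℕ, (k : ℝ) ^ n / k.factorial := by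
  rw [bell, Nat.card_eq_fintype_card, Finpartition.card_eq_bell, card_univ, Fintype.card_fin,
    (hasSum_pow_div_factorial n).tsum_eq]
  field_simp
end

section
/- The n-th moment of a Poisson random variable with parameter 1 equals the n-th Bell number: ∑_{k=0}^∞ e^{-1} k^n / k! = B_n. -/
open scoped BigOperators

/-!
Dobinski's formula. A map `Fin n → Fin k` is determined by the partition of `Fin n` into its
fibres together with an injection of the parts into `Fin k`, so
`k ^ n = ∑ P, k.descFactorial #P.parts`, the sum running over the partitions `P` of `Fin n`.
Every factorial moment of a Poisson(1) variable equals `1`, because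
`e⁻¹ ∑ₖ k.descFactorial j / k! = e⁻¹ ∑ₖ 1 / k! = 1`; hence the `n`-th moment is the number of
partitions of `Fin n`.
-/

open Finset Real
open scoped Nat

namespace Finpartition

variable {α : Type*} [DecidableEq α]

theorem part_injective {s : Finset α} :
    Function.Injective (part : Finpartition s → α → Finset α) := by
  intro P Q h
  have mem_parts (R : Finpartition s) (t : Finset α) : t ∈ R.parts ↔ ∃ a ∈ s, R.part a = t :=
    ⟨fun ht => R.part_surjOn ht, fun ⟨a, ha, hat⟩ => hat ▸ R.part_mem.2 ha⟩
  ext t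
  rw [mem_parts, mem_parts, h]

variable [Fintype α] {β : Type*} [DecidableEq β]

def ker (f : α → β) : Finpartition (univ : Finset α) :=
  @ofSetoid _ _ _ (Setoid.ker f) fun a b => decEq (f a) (f b)

theorem mem_part_ker {f : α → β} {a b : α} : b ∈ (ker f).part a ↔ f a = f b :=
  mem_part_ofSetoid_iff_rel

theorem ker_eq_iff {f : α → β} {P : Finpartition (univ : Finset α)} :
    ker f = P ↔ ∀ a b, b ∈ P.part a ↔ f a = f b := by
  refine ⟨fun h a b => h ▸ mem_part_ker, fun h => part_injective ?_⟩
  funext a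
  ext b
  rw [mem_part_ker, h]

theorem bijective_comp_part_ker (P : Finpartition (univ : Finset α)) :
    Function.Bijective fun e : P.parts ↪ β =>
      (⟨fun a => e ⟨P.part a, P.part_mem.2 (mem_univ a)⟩,
        ker_eq_iff.2 fun a b => by
          rw [e.injective.eq_iff, Subtype.mk.injEq, eq_comm,
            P.mem_part_iff_part_eq_part (mem_univ b) (mem_univ a)]⟩ :
        {f : α → β // ker f = P}) := by
  constructor
  · intro e e' h
    ext ⟨t, ht⟩ : 2
    obtain ⟨a, -, rfl⟩ := P.part_surjOn ht
    exact congrFun (congrArg Subtype.val h) a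
  · rintro ⟨f, hf⟩
    have hP := ker_eq_iff.1 hf
    choose rep hrep using fun t : P.parts => P.nonempty_of_mem_parts t.2
    have part_rep (t : P.parts) : P.part (rep t) = t := P.part_eq_of_mem t.2 (hrep t)
    refine ⟨⟨fun t => f (rep t), fun t u htu => Subtype.ext ?_⟩, Subtype.ext (funext fun a => ?_)⟩
    · have hu : rep u ∈ (t : Finset α) := part_rep t ▸ (hP _ _).2 htu
      exact P.eq_of_mem_parts t.2 u.2 hu (hrep u)
    · have ha : rep ⟨P.part a, P.part_mem.2 (mem_univ a)⟩ ∈ P.part a := hrep _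
      exact ((hP _ _).1 ha).symm

theorem card_ker_eq [Fintype β] (P : Finpartition (univ : Finset α)) :
    Fintype.card {f : α → β // ker f = P} = (Fintype.card β).descFactorial #P.parts := by
  rw [← Fintype.card_of_bijective (bijective_comp_part_ker P), Fintype.card_embedding_eq,
    Fintype.card_coe]

theorem card_fun_eq_sum_descFactorial [Fintype β] :
    Fintype.card (α → β) =
      ∑ P : Finpartition (univ : Finset α), (Fintype.card β).descFactorial #P.parts := by
  rw [← Fintype.card_congr (Equiv.sigmaFiberEquiv ker), Fintype.card_sigma]
  simp_rw [card_ker_eq]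

end Finpartition

theorem hasSum_poisson_one_descFactorial (j : ℕ) :
    HasSum (fun k : ℕ => exp (-1) * k.descFactorial j / k !) 1 := by
  rw [← hasSum_nat_add_iff' j]
  have head : ∑ k ∈ range j, exp (-1) * (k.descFactorial j : ℝ) / k ! = 0 :=
    sum_eq_zero fun k hk => by
      rw [Nat.descFactorial_eq_zero_iff_lt.2 (mem_range.1 hk)]; simp
  have shift (k : ℕ) : ((k + j).descFactorial j : ℝ) / (k + j)! = 1 / k ! := by
    rw [← Nat.factorial_mul_descFactorial (Nat.le_add_left j k), Nat.add_sub_cancel]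
    push_cast
    field_simp
  simp_rw [head, sub_zero, mul_div_assoc, shift]
  simpa [div_eq_mul_inv] using ProbabilityTheory.hasSum_one_poissonMeasure 1

theorem hasSum_poisson_one_pow_card (α : Type*) [Fintype α] [DecidableEq α] :
    HasSum (fun k : ℕ => exp (-1) * (k : ℝ) ^ Fintype.card α / k !)
      (Fintype.card (Finpartition (univ : Finset α))) := by
  have pow_eq (k : ℕ) : (k : ℝ) ^ Fintype.card α =
      ∑ P : Finpartition (univ : Finset α), (k.descFactorial #P.parts : ℝ) := by
    have h := Finpartition.card_fun_eq_sum_descFactorial (α := α) (β := Fin k)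
    rw [Fintype.card_fun, Fintype.card_fin] at h
    exact_mod_cast h
  simp_rw [pow_eq, mul_sum, sum_div, Fintype.card_eq_sum_ones, Nat.cast_sum, Nat.cast_one]
  exact hasSum_sum fun P _ => hasSum_poisson_one_descFactorial #P.parts

/-- The n-th moment of a Poisson(1) random variable is the n-th Bell number. -/
theorem poisson_one_moment_eq_bell (n : ℕ) :
    ∑' k : ℕ, Real.exp (-1) * (k : ℝ) ^ n / k.factorial = bell n := by
  rw [bell, Nat.card_eq_fintype_card]
  simpa using (hasSum_poisson_one_pow_card (Fin n)).tsum_eq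
end

section
/- For a permutation σ of [n], the number of m-element subsets A ⊆ [n] with σ(A) = A equals the sum over tuples (l_1,…,l_m) of nonnegative integers with ∑_{j=1}^m j·l_j = m of ∏_{j=1}^m C(C_j^{(n)}(σ), l_j). -/
/-!
A finset is fixed by `σ` exactly when it is a union of orbits of `σ`, and distinct orbits are
disjoint, so the `m`-element fixed sets correspond to the families of orbits whose sizes add up
to `m`. Sorting a family by orbit size, it amounts to choosing `l_j` of the `C_j(σ)` orbits of
size `j` for every `j`, where `∑ j * l_j = m`.
-/

open scoped BigOperators

noncomputable def cycleCount {n : ℕ} (σ : Equiv.Perm (Fin n)) (m : ℕ) : ℕ :=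
  Nat.card {D : Finset (Fin n) // D.card = m ∧ σ.IsCycleOn ↑D}

open Finset

namespace Equiv.Perm

variable {α : Type*} {σ : Perm α} {x : α}

theorem isCycleOn_setOf_sameCycle (σ : Perm α) (x : α) : σ.IsCycleOn {y | σ.SameCycle x y} :=
  ⟨⟨fun _ hy => hy.apply_right, σ.injective.injOn,
    fun y hy => ⟨σ⁻¹ y, hy.symm_apply_right, σ.apply_symm_apply y⟩⟩,
    fun _ hy _ hz => hy.symm.trans hz⟩

theorem IsCycleOn.eq_setOf_sameCycle {s : Set α} (hs : σ.IsCycleOn s) (hx : x ∈ s) :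
    s = {y | σ.SameCycle x y} := by
  rw [← hs.range_zpow hx]
  rfl

theorem IsCycleOn.eq_of_mem {s t : Set α} (hs : σ.IsCycleOn s) (ht : σ.IsCycleOn t)
    (hxs : x ∈ s) (hxt : x ∈ t) : s = t :=
  (hs.eq_setOf_sameCycle hxs).trans (ht.eq_setOf_sameCycle hxt).symm

theorem setOf_sameCycle_subset_of_bijOn {s : Set α} (hs : Set.BijOn σ s s) (hx : x ∈ s) :
    {y | σ.SameCycle x y} ⊆ s := by
  rintro _ ⟨k, rfl⟩
  exact (hs.perm_zpow k).mapsTo hx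

theorem image_eq_self_iff_bijOn [DecidableEq α] {s : Finset α} :
    s.image σ = s ↔ Set.BijOn σ s s := by
  rw [← coe_inj, coe_image]
  refine ⟨fun h => ?_, Set.BijOn.image_eq⟩
  simpa only [h] using σ.injective.injOn.bijOn_image (s := (s : Set α))

section Orbits

variable [Fintype α]

open Classical in
/-- The orbits of `⟨σ⟩`, fixed points included as singletons. -/
noncomputable def orbits (σ : Perm α) : Finset (Finset α) :=
  {D | D.Nonempty ∧ σ.IsCycleOn D}

theorem mem_orbits {D : Finset α} : D ∈ σ.orbits ↔ D.Nonempty ∧ σ.IsCycleOn D := by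
  simp [orbits]

theorem pairwiseDisjoint_orbits : (σ.orbits : Set (Finset α)).PairwiseDisjoint id := by
  intro D hD E hE hDE
  refine disjoint_left.2 fun x hxD hxE => hDE (coe_injective ?_)
  exact (mem_orbits.1 hD).2.eq_of_mem (mem_orbits.1 hE).2 hxD hxE

variable [DecidableEq α] {S : Finset (Finset α)}

theorem card_biUnion_of_subset_orbits (hS : S ⊆ σ.orbits) : #(S.biUnion id) = ∑ D ∈ S, #D :=
  card_biUnion (pairwiseDisjoint_orbits.subset (coe_subset.2 hS))

theorem image_biUnion_of_subset_orbits (hS : S ⊆ σ.orbits) :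
    (S.biUnion id).image σ = S.biUnion id := by
  rw [biUnion_image]
  exact biUnion_congr rfl fun D hD => image_eq_self_iff_bijOn.2 (mem_orbits.1 (hS hD)).2.1

theorem filter_orbits_subset_biUnion (hS : S ⊆ σ.orbits) :
    {D ∈ σ.orbits | D ⊆ S.biUnion id} = S := by
  ext D
  rw [mem_filter]
  refine ⟨fun ⟨hD, hDS⟩ => ?_, fun hD => ⟨hS hD, subset_biUnion_of_mem id hD⟩⟩
  obtain ⟨x, hxD⟩ := (mem_orbits.1 hD).1
  obtain ⟨E, hE, hxE⟩ := mem_biUnion.1 (hDS hxD)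
  convert hE
  exact coe_injective ((mem_orbits.1 hD).2.eq_of_mem (mem_orbits.1 (hS hE)).2 hxD hxE)

theorem biUnion_filter_orbits_subset {A : Finset α} (hA : A.image σ = A) :
    {D ∈ σ.orbits | D ⊆ A}.biUnion id = A := by
  refine Subset.antisymm (biUnion_subset.2 fun D hD => (mem_filter.1 hD).2) fun x hx => ?_
  set O := univ.filter (σ.SameCycle x)
  have hO : (O : Set α) = {y | σ.SameCycle x y} := by simp [O]
  have hxO : x ∈ O := mem_filter.2 ⟨mem_univ _, .refl _ _⟩
  refine mem_biUnion.2 ⟨O, mem_filter.2 ⟨mem_orbits.2 ⟨⟨x, hxO⟩, ?_⟩, ?_⟩, hxO⟩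
  · rw [hO]
    exact isCycleOn_setOf_sameCycle σ x
  · rw [← coe_subset, hO]
    exact setOf_sameCycle_subset_of_bijOn (image_eq_self_iff_bijOn.1 hA) hx

theorem card_fixedFinsets_eq_card_orbitFamilies (m : ℕ) :
    #{A : Finset α | #A = m ∧ A.image σ = A} =
      #{S ∈ σ.orbits.powerset | ∑ D ∈ S, #D = m} := by
  refine card_nbij' (fun A => {D ∈ σ.orbits | D ⊆ A}) (fun S => S.biUnion id) ?_ ?_ ?_ ?_
  · intro A hA
    simp only [mem_coe, mem_filter, mem_univ, true_and, mem_powerset] at hA ⊢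
    refine ⟨filter_subset _ _, ?_⟩
    rw [← card_biUnion_of_subset_orbits (filter_subset _ _), biUnion_filter_orbits_subset hA.2,
      hA.1]
  · intro S hS
    simp only [mem_coe, mem_filter, mem_univ, true_and, mem_powerset] at hS ⊢
    exact ⟨(card_biUnion_of_subset_orbits hS.1).trans hS.2, image_biUnion_of_subset_orbits hS.1⟩
  · intro A hA
    exact biUnion_filter_orbits_subset (mem_filter.1 hA).2.2
  · intro S hS
    exact filter_orbits_subset_biUnion (mem_powerset.1 (mem_filter.1 hS).1)

end Orbits

end Equiv.Perm

/-- `l j` is the multiplicity of the part `j + 1` in a partition of `m`. -/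
def partitionMultiplicities (m : ℕ) : Finset (Fin m → ℕ) :=
  {l ∈ Fintype.piFinset fun _ : Fin m => range (m + 1) | ∑ j : Fin m, (j.1 + 1) * l j = m}

namespace Finset

variable {β : Type*} {m : ℕ}

theorem card_filter_piFinset_powerset_eq_sum (Ω : Fin m → Finset β) :
    #{F ∈ Fintype.piFinset fun j => (Ω j).powerset | ∑ j, (j.1 + 1) * #(F j) = m} =
      ∑ l ∈ partitionMultiplicities m, ∏ j, (#(Ω j)).choose (l j) := by
  rw [card_eq_sum_card_fiberwise (f := fun F j => #(F j)) (t := partitionMultiplicities m)]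
  · refine sum_congr rfl fun l hl => ?_
    simp_rw [← card_powersetCard, ← Fintype.card_piFinset]
    congr 1
    ext F
    have hlsum := (mem_filter.1 hl).2
    simp only [mem_filter, Fintype.mem_piFinset, mem_powerset, mem_powersetCard, funext_iff]
    constructor
    · rintro ⟨⟨hsub, -⟩, hcard⟩
      exact fun j => ⟨hsub j, hcard j⟩
    · intro h
      refine ⟨⟨fun j => (h j).1, ?_⟩, fun j => (h j).2⟩
      simpa only [(h _).2] using hlsum
  · intro F hF
    obtain ⟨-, hsum⟩ := mem_filter.1 hF
    refine mem_filter.2 ⟨Fintype.mem_piFinset.2 fun j => mem_range.2 ?_, hsum⟩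
    have := single_le_sum (fun (i : Fin m) _ => Nat.zero_le ((i.1 + 1) * #(F i))) (mem_univ j)
    nlinarith

section Weight

variable [DecidableEq β] (w : β → ℕ)

theorem sum_biUnion_of_forall_mem_eq {F : Fin m → Finset β}
    (hF : ∀ j, ∀ b ∈ F j, w b = j.1 + 1) :
    ∑ b ∈ univ.biUnion F, w b = ∑ j, (j.1 + 1) * #(F j) := by
  rw [sum_biUnion]
  · exact sum_congr rfl fun j _ => by rw [sum_congr rfl (hF j), sum_const, smul_eq_mul, mul_comm]
  · intro i _ j _ hij
    refine disjoint_left.2 fun b hbi hbj => hij (Fin.ext ?_)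
    have := (hF i b hbi).symm.trans (hF j b hbj)
    omega

theorem filter_biUnion_of_forall_mem_eq {F : Fin m → Finset β}
    (hF : ∀ j, ∀ b ∈ F j, w b = j.1 + 1) (j : Fin m) :
    {b ∈ univ.biUnion F | w b = j.1 + 1} = F j := by
  ext b
  simp only [mem_filter, mem_biUnion, mem_univ, true_and]
  constructor
  · rintro ⟨⟨i, hbi⟩, hb⟩
    obtain rfl : i = j := Fin.ext (by have := hF i b hbi; omega)
    exact hbi
  · exact fun hb => ⟨⟨j, hb⟩, hF j b hb⟩

theorem biUnion_filter_eq_of_forall_mem {S : Finset β} (hS : ∀ b ∈ S, 0 < w b ∧ w b ≤ m) :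
    univ.biUnion (fun j : Fin m => {b ∈ S | w b = j.1 + 1}) = S := by
  ext b
  simp only [mem_biUnion, mem_filter, mem_univ, true_and]
  refine ⟨fun ⟨_, hb, _⟩ => hb, fun hb => ⟨⟨w b - 1, ?_⟩, hb, ?_⟩⟩ <;> grind

theorem card_filter_powerset_sum_eq_card_filter_piFinset (Ω : Finset β)
    (hw : ∀ b ∈ Ω, 0 < w b) :
    #{S ∈ Ω.powerset | ∑ b ∈ S, w b = m} =
      #{F ∈ Fintype.piFinset fun j : Fin m => {b ∈ Ω | w b = j.1 + 1}.powerset |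
        ∑ j, (j.1 + 1) * #(F j) = m} := by
  have bounded {S : Finset β} (hSΩ : S ⊆ Ω) (hSm : ∑ b ∈ S, w b = m) :
      ∀ b ∈ S, 0 < w b ∧ w b ≤ m := fun b hb =>
    ⟨hw b (hSΩ hb), hSm ▸ single_le_sum (fun _ _ => Nat.zero_le _) hb⟩
  have weight_eq {F : Fin m → Finset β} (hF : ∀ j, F j ⊆ {b ∈ Ω | w b = j.1 + 1}) :
      ∀ j, ∀ b ∈ F j, w b = j.1 + 1 := fun j _ hb => (mem_filter.1 (hF j hb)).2
  refine card_nbij' (fun S j => {b ∈ S | w b = j.1 + 1}) (fun F => univ.biUnion F) ?_ ?_ ?_ ?_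
  · intro S hS
    simp only [mem_coe, mem_filter, mem_powerset, Fintype.mem_piFinset] at hS ⊢
    refine ⟨fun j => filter_subset_filter _ hS.1, ?_⟩
    rw [← sum_biUnion_of_forall_mem_eq w fun j b hb => (mem_filter.1 hb).2,
      biUnion_filter_eq_of_forall_mem w (bounded hS.1 hS.2), hS.2]
  · intro F hF
    simp only [mem_coe, mem_filter, mem_powerset, Fintype.mem_piFinset] at hF ⊢
    refine ⟨biUnion_subset.2 fun j _ => (hF.1 j).trans (filter_subset _ _), ?_⟩
    rw [sum_biUnion_of_forall_mem_eq w (weight_eq hF.1), hF.2]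
  · intro S hS
    simp only [mem_coe, mem_filter, mem_powerset] at hS
    exact biUnion_filter_eq_of_forall_mem w (bounded hS.1 hS.2)
  · intro F hF
    simp only [mem_coe, mem_filter, Fintype.mem_piFinset, mem_powerset] at hF
    exact funext (filter_biUnion_of_forall_mem_eq w (weight_eq hF.1))

theorem card_filter_powerset_sum_eq_sum (Ω : Finset β) (hw : ∀ b ∈ Ω, 0 < w b) :
    #{S ∈ Ω.powerset | ∑ b ∈ S, w b = m} =
      ∑ l ∈ partitionMultiplicities m,
        ∏ j : Fin m, (#{b ∈ Ω | w b = j.1 + 1}).choose (l j) :=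
  (card_filter_powerset_sum_eq_card_filter_piFinset w Ω hw).trans
    (card_filter_piFinset_powerset_eq_sum _)

end Weight

end Finset

theorem cycleCount_eq_card_filter_orbits {n k : ℕ} (σ : Equiv.Perm (Fin n)) (hk : 0 < k) :
    cycleCount σ k = #{D ∈ σ.orbits | #D = k} := by
  classical
  rw [cycleCount, Nat.card_eq_fintype_card, Fintype.card_subtype]
  congr 1
  ext D
  simp only [mem_filter, mem_univ, true_and, Equiv.Perm.mem_orbits]
  exact ⟨fun ⟨hcard, hcyc⟩ => ⟨⟨card_pos.1 (hcard ▸ hk), hcyc⟩, hcard⟩,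
    fun ⟨⟨_, hcyc⟩, hcard⟩ => ⟨hcard, hcyc⟩⟩

/-- The number of m-sets fixed by σ in terms of its cycle counts. -/
theorem card_fixed_sets_eq_sum (n m : ℕ) (σ : Equiv.Perm (Fin n)) :
    Nat.card {A : Finset (Fin n) // A.card = m ∧ A.image σ = A} =
      ∑ l ∈ (Fintype.piFinset fun _ : Fin m => Finset.range (m + 1)).filter
          (fun l : Fin m → ℕ => ∑ j : Fin m, (j.1 + 1) * l j = m),
        ∏ j : Fin m, (cycleCount σ (j.1 + 1)).choose (l j) := by
  rw [Nat.card_eq_fintype_card, Fintype.card_subtype, σ.card_fixedFinsets_eq_card_orbitFamilies,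
    card_filter_powerset_sum_eq_sum card _ fun D hD => (σ.mem_orbits.1 hD).1.card_pos]
  simp only [cycleCount_eq_card_filter_orbits σ (Nat.succ_pos _)]
  rfl
end

section
/- Let n ≥ km and let σ be a uniformly random permutation of [n]. Then the k-th moment of ℰ_m^{(n)}, the number of m-element subsets of [n] fixed setwise by σ, equals v_{k;m}, the number of m-covers of [k]. -/
open scoped BigOperators

noncomputable def numCovers (k m : ℕ) : ℕ :=
  Nat.card {C : Multiset (Finset (Fin k)) //
    (∀ s ∈ C, s ≠ ∅) ∧ ∀ i : Fin k, Multiset.countP (fun s => i ∈ s) C = m}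

noncomputable def setsFixed (n m : ℕ) (σ : Equiv.Perm (Fin n)) : ℕ :=
  Nat.card {A : Finset (Fin n) // A.card = m ∧ A.image σ = A}

/-!
A `k`-tuple `(A₁, …, Aₖ)` of `m`-subsets of `[n]` is the same as its incidence map
`x ↦ {i | x ∈ Aᵢ}`, a map `[n] → 2^[k]` in which every `i` lies in exactly `m` values, and
all `Aᵢ` are fixed by `σ` iff this map is `σ`-invariant. Hence the sum of the `k`-th powers of
the fixed-set counts is the Burnside sum for `Perm [n]` acting on incidence maps, i.e. `n!` times
the number of orbits. An orbit is determined by the multiset of nonempty values of the map, which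
is an `m`-cover of `[k]`, and every `m`-cover occurs since it has at most `km ≤ n` blocks.
-/

open Finset Equiv
variable {α β ι : Type*}

theorem Finset.image_perm_eq_self_iff [DecidableEq α] {σ : Perm α} {A : Finset α} :
    A.image σ = A ↔ ∀ x, σ x ∈ A ↔ x ∈ A := by
  rw [← coe_toEmbedding, ← map_eq_image, Finset.ext_iff]
  refine ⟨fun h x => ?_, fun h x => ?_⟩
  · simpa using (h (σ x)).symm
  · simpa using (h (σ.symm x)).symm

theorem Multiset.exists_map_univ_val_eq [Fintype α] (M : Multiset β)
    (h : card M = Fintype.card α) : ∃ f : α → β, univ.val.map f = M := by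
  classical
  obtain ⟨e⟩ : Nonempty (α ≃ M) := Fintype.card_eq.1 (by rw [Multiset.card_coe, h])
  refine ⟨fun x => ((e x : M) : β), ?_⟩
  conv_rhs => rw [← Multiset.map_univ_coe M]
  rw [← map_univ_val_equiv e, Multiset.map_map]
  rfl

theorem Equiv.Perm.exists_comp_eq_of_map_univ_val_eq [Fintype α] [DecidableEq β] {f g : α → β}
    (h : univ.val.map f = univ.val.map g) : ∃ σ : Perm α, f ∘ σ = g := by
  have hfiber (b : β) : {x // g x = b} ≃ {x // f x = b} := by
    refine Fintype.equivOfCardEq ?_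
    have := congrArg (Multiset.count b) h.symm
    simp only [Multiset.count_map, ← filter_val, ← card_def] at this
    simpa only [Fintype.card_subtype, eq_comm] using this
  refine ⟨(sigmaFiberEquiv g).symm.trans
    ((Equiv.sigmaCongrRight hfiber).trans (sigmaFiberEquiv f)), funext fun x => ?_⟩
  exact (hfiber (g x) ⟨x, rfl⟩).2

theorem Multiset.eq_of_card_eq_of_filter_ne_eq [DecidableEq α] {a : α} {M N : Multiset α}
    (hcard : card M = card N) (h : M.filter (· ≠ a) = N.filter (· ≠ a)) : M = N := by
  have hsplit (L : Multiset α) : L.filter (· ≠ a) + replicate (L.count a) a = L := by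
    rw [← filter_eq', add_comm]
    simpa using filter_add_not (· = a) L
  have hcount : M.count a = N.count a := by
    have hM := congrArg card (hsplit M)
    have hN := congrArg card (hsplit N)
    simp only [card_add, card_replicate, h] at hM hN
    omega
  rw [← hsplit M, ← hsplit N, h, hcount]

theorem Multiset.countP_map_univ_val [Fintype α] (f : α → β) (p : β → Prop)
    [DecidablePred p] :
    (univ.val.map f).countP p = #{x | p (f x)} := by
  rw [Multiset.countP_map, ← filter_val, ← card_def]

theorem Multiset.card_le_sum_countP_mem [Fintype ι] [DecidableEq ι] {C : Multiset (Finset ι)}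
    (hC : ∀ s ∈ C, s ≠ ∅) : card C ≤ ∑ i, C.countP (i ∈ ·) := by
  induction C using Multiset.induction with
  | empty => simp
  | cons a C ih =>
    have ha : 1 ≤ #a := Finset.card_pos.2 (nonempty_iff_ne_empty.2 (hC a (mem_cons_self a C)))
    have hC' := ih fun s hs => hC s (mem_cons_of_mem hs)
    simp only [card_cons, countP_cons, sum_add_distrib, sum_ite_mem, univ_inter, sum_const,
      smul_eq_mul, mul_one]
    omega

variable (α ι) (m : ℕ) [Fintype α] [DecidableEq ι]

abbrev Incidence : Type _ :=
  {f : α → Finset ι // ∀ i, #{x | i ∈ f x} = m}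

abbrev Cover : Type _ :=
  {C : Multiset (Finset ι) // (∀ s ∈ C, s ≠ ∅) ∧ ∀ i, C.countP (i ∈ ·) = m}

variable {m α ι}

instance : MulAction (Perm α) (Incidence α ι m) where
  smul σ f := ⟨f.1 ∘ ⇑σ⁻¹, fun i =>
    (card_nbij' (⇑σ⁻¹) σ (fun _ => by simp) (fun _ => by simp) (fun _ _ => by simp)
      (fun _ _ => by simp)).trans (f.2 i)⟩
  one_smul _ := rfl
  mul_smul _ _ _ := rfl

namespace Incidence

theorem smul_val (σ : Perm α) (f : Incidence α ι m) : (σ • f).1 = f.1 ∘ ⇑σ⁻¹ := rfl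

theorem smul_eq_self_iff {σ : Perm α} {f : Incidence α ι m} :
    σ • f = f ↔ ∀ x, f.1 (σ x) = f.1 x := by
  rw [Subtype.ext_iff, smul_val, funext_iff]
  exact (σ.forall_congr_right).symm.trans (by simp [eq_comm])

theorem countP_map_val (f : Incidence α ι m) (i : ι) :
    (univ.val.map f.1).countP (i ∈ ·) = m :=
  (Multiset.countP_map_univ_val _ _).trans (f.2 i)

def toCover (f : Incidence α ι m) : Cover ι m :=
  ⟨(univ.val.map f.1).filter (· ≠ ∅), fun _ hs => (Multiset.mem_filter.1 hs).2, fun i => by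
    rw [Multiset.countP_filter]
    refine Eq.trans (Multiset.countP_congr rfl fun s _ => ?_) (f.countP_map_val i)
    exact propext (and_iff_left_of_imp ne_empty_of_mem)⟩

theorem toCover_smul (σ : Perm α) (f : Incidence α ι m) : (σ • f).toCover = f.toCover := by
  simp only [toCover, smul_val, ← Multiset.map_map, Multiset.map_univ_val_equiv]

theorem orbitRel_iff {f g : Incidence α ι m} :
    MulAction.orbitRel (Perm α) (Incidence α ι m) f g ↔ f.toCover = g.toCover := by
  refine ⟨fun h => ?_, fun h => ?_⟩
  · obtain ⟨σ, rfl⟩ := MulAction.orbitRel_apply.1 h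
    exact toCover_smul σ g
  · have hmap : univ.val.map g.1 = univ.val.map f.1 :=
      Multiset.eq_of_card_eq_of_filter_ne_eq (by simp) (congrArg Subtype.val h).symm
    obtain ⟨σ, hσ⟩ := Perm.exists_comp_eq_of_map_univ_val_eq hmap
    exact MulAction.orbitRel_apply.2 ⟨σ⁻¹, Subtype.ext (by rw [smul_val, inv_inv, hσ])⟩

theorem toCover_surjective [Fintype ι] (h : Fintype.card ι * m ≤ Fintype.card α) :
    Function.Surjective (toCover : Incidence α ι m → Cover ι m) := by
  rintro ⟨C, hne, hcount⟩
  have hC : Multiset.card C ≤ Fintype.card α := by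
    have := Multiset.card_le_sum_countP_mem hne
    simp only [hcount, sum_const, card_univ, smul_eq_mul] at this
    omega
  obtain ⟨f, hf⟩ := Multiset.exists_map_univ_val_eq (α := α)
    (C + Multiset.replicate (Fintype.card α - Multiset.card C) ∅)
    (by rw [Multiset.card_add, Multiset.card_replicate]; omega)
  have hreg (i : ι) : #{x | i ∈ f x} = m := by
    rw [← Multiset.countP_map_univ_val f (i ∈ ·), hf, Multiset.countP_add, hcount,
      Multiset.countP_eq_zero.2 fun s hs => by simp [Multiset.eq_of_mem_replicate hs], add_zero]
  refine ⟨⟨f, hreg⟩, Subtype.ext ?_⟩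
  show (univ.val.map f).filter (· ≠ ∅) = C
  rw [hf, Multiset.filter_add, Multiset.filter_eq_self.2 hne,
    Multiset.filter_eq_nil.2 fun s hs => by simp [Multiset.eq_of_mem_replicate hs], add_zero]

def fixedSetsPiEquivFixedBy [Fintype ι] [DecidableEq α] (σ : Perm α) :
    (ι → {A : Finset α // #A = m ∧ A.image σ = A}) ≃
      MulAction.fixedBy (Incidence α ι m) σ where
  toFun T := ⟨⟨fun x => {i | x ∈ (T i).1}, fun i => by simpa using (T i).2.1⟩, by
    rw [MulAction.mem_fixedBy, smul_eq_self_iff]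
    intro x
    ext i
    simpa using image_perm_eq_self_iff.1 (T i).2.2 x⟩
  invFun f i := ⟨({x | i ∈ f.1.1 x} : Finset α), f.1.2 i, image_perm_eq_self_iff.2 fun x => by
    simp [smul_eq_self_iff.1 f.2 x]⟩
  left_inv T := by
    ext
    simp
  right_inv f := by
    ext
    simp

noncomputable def orbitRelQuotientEquivCover [Fintype ι]
    (h : Fintype.card ι * m ≤ Fintype.card α) :
    MulAction.orbitRel.Quotient (Perm α) (Incidence α ι m) ≃ Cover ι m :=
  (Quotient.congrRight fun _ _ => orbitRel_iff).trans
    (Setoid.quotientKerEquivOfSurjective _ (toCover_surjective h))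

end Incidence

theorem sum_card_fixedSets_pow [Fintype ι] [DecidableEq α]
    (h : Fintype.card ι * m ≤ Fintype.card α) :
    ∑ σ : Perm α, Nat.card {A : Finset α // #A = m ∧ A.image σ = A} ^ Fintype.card ι =
      Nat.card (Cover ι m) * (Fintype.card α).factorial := by
  classical
  calc ∑ σ : Perm α, Nat.card {A : Finset α // #A = m ∧ A.image σ = A} ^ Fintype.card ι
      = ∑ σ : Perm α, Nat.card (MulAction.fixedBy (Incidence α ι m) σ) :=
        sum_congr rfl fun σ _ => by
          rw [← Nat.card_congr (Incidence.fixedSetsPiEquivFixedBy σ), Nat.card_fun,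
            Nat.card_eq_fintype_card (α := ι)]
    _ = Nat.card (MulAction.orbitRel.Quotient (Perm α) (Incidence α ι m)) *
          Nat.card (Perm α) := by
        simpa only [Nat.card_eq_fintype_card] using
          MulAction.sum_card_fixedBy_eq_card_orbits_mul_card_group (Perm α) (Incidence α ι m)
    _ = Nat.card (Cover ι m) * (Fintype.card α).factorial := by
        rw [Nat.card_congr (Incidence.orbitRelQuotientEquivCover h),
          Nat.card_eq_fintype_card (α := Perm α), Fintype.card_perm]

/-- The k-th moment of the number of setwise-fixed m-sets of a uniform permutation
of [n], n ≥ km, equals the number of m-covers of [k]. -/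
theorem moment_setsFixed (n m k : ℕ) (hn : k * m ≤ n) :
    (∑ σ : Equiv.Perm (Fin n), (setsFixed n m σ : ℝ) ^ k) / n.factorial =
      numCovers k m := by
  have h := sum_card_fixedSets_pow (α := Fin n) (ι := Fin k) (by simpa using hn)
  rw [Fintype.card_fin, Fintype.card_fin] at h
  rw [div_eq_iff (by positivity)]
  exact_mod_cast h
end

section
/- Let n ≥ 2m and σ a uniformly random permutation of [n]. Then E[(ℰ_m^{(n)})²] = m + 1, and hence Var(ℰ_m^{(n)}) = m. -/
/-! By Burnside's lemma, `∑ σ, setsFixed n m σ` and `∑ σ, setsFixed n m σ ^ 2` are `n!` times the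
number of orbits of `Perm (Fin n)` on `m`-subsets and on pairs of `m`-subsets respectively. The
first action is transitive. The orbit of a pair `(A, B)` is determined by `#(A ∩ B)`: a permutation
carrying the four Venn regions of one pair onto those of another exists as soon as their sizes
agree, and these sizes are fixed by `m`, `n` and `#(A ∩ B)`. When `2 * m ≤ n` every intersection
size `0, …, m` occurs, so there are `m + 1` orbits of pairs. -/

open scoped BigOperators

open MulAction Finset Equiv
open scoped Pointwise

theorem Equiv.Perm.exists_apply_comp_eq_of_card_fiber_eq {α β : Type*} [Finite α] {f g : α → β}
    (h : ∀ b, Nat.card {x // f x = b} = Nat.card {x // g x = b}) :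
    ∃ σ : Perm α, ∀ x, g (σ x) = f x :=
  ⟨.ofFiberEquiv fun b => (Finite.card_eq.mp (h b)).some, Equiv.ofFiberEquiv_map _⟩

theorem MulAction.card_orbitRel_quotient_eq_card_range {G X ι : Type*} [Group G] [MulAction G X]
    (φ : X → ι) (hφ : ∀ x y, (∃ g : G, g • x = y) ↔ φ x = φ y) :
    Nat.card (orbitRel.Quotient G X) = Nat.card (Set.range φ) :=
  Nat.card_congr <| (Quotient.congrRight fun x y => (hφ y x).trans eq_comm).trans
    (Setoid.quotientKerEquivRange φ)

theorem MulAction.sum_card_fixedBy_eq_card_orbits_mul_card {G X : Type*} [Group G] [Fintype G]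
    [MulAction G X] [Finite X] :
    ∑ g : G, Nat.card (fixedBy X g) = Nat.card (orbitRel.Quotient G X) * Nat.card G := by
  classical
  have := Fintype.ofFinite X
  simp only [Nat.card_eq_fintype_card]
  exact sum_card_fixedBy_eq_card_orbits_mul_card_group G X

theorem MulAction.card_fixedBy_prod {G X Y : Type*} [Group G] [MulAction G X] [MulAction G Y]
    (g : G) : Nat.card (fixedBy (X × Y) g) = Nat.card (fixedBy X g) * Nat.card (fixedBy Y g) := by
  rw [← Nat.card_prod]
  exact Nat.card_congr <| (Equiv.subtypeEquivRight fun _ => Prod.ext_iff).trans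
    (Equiv.subtypeProdEquivProd (p := (· ∈ fixedBy X g)) (q := (· ∈ fixedBy Y g)))

namespace Finset

variable {α : Type*} [Fintype α] [DecidableEq α]

theorem card_fiber_mem_mem_eq {s t s' t' : Finset α} (hs : #s = #s') (ht : #t = #t')
    (hst : #(s ∩ t) = #(s' ∩ t')) (b : Bool × Bool) :
    Nat.card {x // (decide (x ∈ s), decide (x ∈ t)) = b} =
      Nat.card {x // (decide (x ∈ s'), decide (x ∈ t')) = b} := by
  have h := card_inter_add_card_union s t
  have h' := card_inter_add_card_union s' t'
  have hc := congrArg card (inter_comm s t)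
  have hc' := congrArg card (inter_comm s' t')
  rcases b with ⟨_ | _, _ | _⟩ <;>
    simp only [Nat.card_eq_fintype_card, Fintype.card_subtype, Prod.mk.injEq, decide_eq_true_eq,
      decide_eq_false_iff_not, ← mem_inter, ← mem_sdiff, ← not_or, ← mem_union, filter_not,
      filter_mem_eq_inter, univ_inter, inter_univ, card_sdiff, card_univ] <;>
    try simp only [and_comm (b := _ ∈ t), and_comm (b := _ ∈ t'), ← mem_sdiff,
      filter_mem_eq_inter, univ_inter, card_sdiff]
  all_goals omega

theorem exists_perm_smul_eq_smul_eq {s t s' t' : Finset α} (hs : #s = #s') (ht : #t = #t')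
    (hst : #(s ∩ t) = #(s' ∩ t')) : ∃ σ : Perm α, σ • s = s' ∧ σ • t = t' := by
  obtain ⟨σ, hσ⟩ := Perm.exists_apply_comp_eq_of_card_fiber_eq (card_fiber_mem_mem_eq hs ht hst)
  simp only [Prod.mk.injEq, decide_eq_decide] at hσ
  refine ⟨σ, ext fun y => ?_, ext fun y => ?_⟩ <;> rw [← inv_smul_mem_iff, Perm.smul_def]
  · simpa using (hσ (σ⁻¹ y)).1.symm
  · simpa using (hσ (σ⁻¹ y)).2.symm

theorem exists_card_eq_card_eq_card_inter_eq {m k : ℕ} (hkm : k ≤ m)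
    (h : 2 * m ≤ Fintype.card α + k) : ∃ s t : Finset α, #s = m ∧ #t = m ∧ #(s ∩ t) = k := by
  obtain ⟨s, -, hs⟩ := exists_subset_card_eq (s := (univ : Finset α)) (n := m) (by simp; omega)
  obtain ⟨c, hcs, hc⟩ := exists_subset_card_eq (hkm.trans hs.ge)
  obtain ⟨d, hds, hd⟩ := exists_subset_card_eq (s := sᶜ) (n := m - k) (by rw [card_compl]; omega)
  have hsd : Disjoint s d := disjoint_of_subset_right hds disjoint_compl_right
  refine ⟨s, c ∪ d, hs, ?_, ?_⟩
  · rw [card_union_of_disjoint (disjoint_of_subset_left hcs hsd), hc, hd]; omega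
  · rw [inter_union_distrib_left, inter_eq_right.mpr hcs, disjoint_iff_inter_eq_empty.mp hsd,
      union_empty, hc]

end Finset

namespace Set.powersetCard

variable {α : Type*} [DecidableEq α] {m : ℕ}

theorem exists_perm_smul_eq_iff [Fintype α] (p q : powersetCard α m × powersetCard α m) :
    (∃ σ : Perm α, σ • p = q) ↔ #((p.1 : Finset α) ∩ p.2) = #((q.1 : Finset α) ∩ q.2) := by
  constructor
  · rintro ⟨σ, rfl⟩
    rw [Prod.smul_fst, Prod.smul_snd, coe_smul, coe_smul,
      ← smul_finset_inter, card_smul_finset]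
  · intro h
    obtain ⟨σ, h₁, h₂⟩ := exists_perm_smul_eq_smul_eq ((card_eq p.1).trans (card_eq q.1).symm)
      ((card_eq p.2).trans (card_eq q.2).symm) h
    exact ⟨σ, Prod.ext (Subtype.ext h₁) (Subtype.ext h₂)⟩

theorem card_orbits_prod [Fintype α] (h : 2 * m ≤ Fintype.card α) :
    Nat.card (orbitRel.Quotient (Perm α) (powersetCard α m × powersetCard α m)) = m + 1 := by
  rw [card_orbitRel_quotient_eq_card_range _ exists_perm_smul_eq_iff]
  have hrange : Set.range (fun p : powersetCard α m × powersetCard α m =>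
      #((p.1 : Finset α) ∩ p.2)) = Set.Iic m := by
    ext k
    constructor
    · rintro ⟨p, rfl⟩
      exact (Finset.card_le_card Finset.inter_subset_left).trans (card_eq p.1).le
    · intro hk
      obtain ⟨s, t, hs, ht, hst⟩ := exists_card_eq_card_eq_card_inter_eq (α := α) hk (by omega)
      exact ⟨(⟨s, hs⟩, ⟨t, ht⟩), hst⟩
  simp [hrange]

theorem card_orbits [Fintype α] (h : m ≤ Fintype.card α) :
    Nat.card (orbitRel.Quotient (Perm α) (powersetCard α m)) = 1 := by
  obtain ⟨s, -, hs⟩ := Finset.exists_subset_card_eq (s := (Finset.univ : Finset α)) (n := m)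
    (by simpa)
  have : Nonempty (powersetCard α m) := ⟨⟨s, hs⟩⟩
  obtain ⟨_⟩ := (pretransitive_iff_unique_quotient_of_nonempty (Perm α) (powersetCard α m)).mp
    isPretransitive
  exact Nat.card_unique

theorem card_fixedBy (σ : Perm α) :
    Nat.card (fixedBy (powersetCard α m) σ) = Nat.card {s : Finset α // #s = m ∧ s.image σ = s} :=
  Nat.card_congr <| (Equiv.subtypeEquivRight fun s => by
    rw [mem_fixedBy, ← Subtype.coe_inj, coe_smul, smul_finset_def]; rfl).trans
    (Equiv.subtypeSubtypeEquivSubtypeInter _ _)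

theorem sum_card_fixedBy [Fintype α] (h : m ≤ Fintype.card α) :
    ∑ σ : Perm α, Nat.card (fixedBy (powersetCard α m) σ) = (Fintype.card α).factorial := by
  rw [sum_card_fixedBy_eq_card_orbits_mul_card, card_orbits h, Nat.card_perm, one_mul,
    Nat.card_eq_fintype_card]

theorem sum_card_fixedBy_sq [Fintype α] (h : 2 * m ≤ Fintype.card α) :
    ∑ σ : Perm α, Nat.card (fixedBy (powersetCard α m) σ) ^ 2 =
      (m + 1) * (Fintype.card α).factorial := by
  simp only [sq, ← card_fixedBy_prod]
  rw [sum_card_fixedBy_eq_card_orbits_mul_card, card_orbits_prod h, Nat.card_perm,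
    Nat.card_eq_fintype_card]

end Set.powersetCard

theorem second_moment_and_var_setsFixed (n m : ℕ) (hn : 2 * m ≤ n) :
    (∑ σ : Equiv.Perm (Fin n), (setsFixed n m σ : ℝ) ^ 2) / n.factorial = m + 1 ∧
    (∑ σ : Equiv.Perm (Fin n), (setsFixed n m σ : ℝ) ^ 2) / n.factorial -
        ((∑ σ : Equiv.Perm (Fin n), (setsFixed n m σ : ℝ)) / n.factorial) ^ 2 = m := by
  have hfixed (σ : Perm (Fin n)) :
      setsFixed n m σ = Nat.card (fixedBy (Set.powersetCard (Fin n) m) σ) :=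
    (Set.powersetCard.card_fixedBy σ).symm
  have first : ∑ σ : Perm (Fin n), (setsFixed n m σ : ℝ) = n.factorial := by
    simpa [hfixed] using congrArg (Nat.cast (R := ℝ))
      (Set.powersetCard.sum_card_fixedBy (α := Fin n) (by simp; omega))
  have second : ∑ σ : Perm (Fin n), (setsFixed n m σ : ℝ) ^ 2 = (m + 1) * n.factorial := by
    simpa [hfixed] using congrArg (Nat.cast (R := ℝ))
      (Set.powersetCard.sum_card_fixedBy_sq (α := Fin n) (by simpa))
  have hfact : (n.factorial : ℝ) ≠ 0 := by positivity
  rw [first, second]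
  constructor <;> field_simp; ring
end
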